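/- arXiv:2107.05428 — 2 statements merged into one kernel-verified Lean document; each statement's English description precedes it below -/
import Mathlib

section
/- Let k ≥ 1 be an integer and let ψ_k be as in the context. Then for every z ∈ ℂ with Im z > 0 one has Re ψ_k(z) > 0, Im ψ_k(z) > 0, Re ψ_k′(z) > 0, and Im ψ_k′(z) < 0. Moreover ψ_k satisfies ψ_k(conj z) = conj ψ_k(z), maps (0, ∞) into (0, ∞), and is injective on ℂ \ (−∞, 0]; consequently φ_k := ψ_k² is injective on ℂ \ (−∞, 0]. -/
open MeasureTheory
open Complex Set Metric Real


lemma abs_arg_lt_pi {z : ℂ} (hz : z ∈ Complex.slitPlane) : |Complex.arg z| < π := by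
  rw [abs_lt]
  refine ⟨Complex.neg_pi_lt_arg z, Complex.arg_lt_pi_iff.2 ?_⟩
  rcases Complex.mem_slitPlane_iff.1 hz with h | h
  · exact Or.inl h.le
  · exact Or.inr h

lemma re_cpow_pos {z : ℂ} (hz : z ∈ Complex.slitPlane) {c : ℝ} (hc : |c| ≤ 1/2) :
    0 < (z ^ (c : ℂ)).re := by
  rw [Complex.cpow_ofReal_re]
  have hz0 : z ≠ 0 := Complex.slitPlane_ne_zero hz
  refine mul_pos (Real.rpow_pos_of_pos (norm_pos_iff.mpr hz0) _) ?_
  apply Real.cos_pos_of_mem_Ioo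
  have h1 : |Complex.arg z * c| < π / 2 := by
    rw [abs_mul]
    calc |Complex.arg z| * |c| ≤ |Complex.arg z| * (1/2) := by gcongr
      _ < π * (1/2) := by gcongr; exact abs_arg_lt_pi hz
      _ = π / 2 := by ring
  rw [abs_lt] at h1
  exact ⟨by linarith [h1.1], h1.2⟩

lemma arg_pos_of_im_pos {z : ℂ} (hz : 0 < z.im) : 0 < Complex.arg z := by
  rcases (Complex.arg_nonneg_iff.2 hz.le).lt_or_eq with h | h
  · exact h
  · exact absurd (Complex.arg_eq_zero_iff.1 h.symm).2 (by linarith)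

lemma im_cpow_pos {z : ℂ} (hz : 0 < z.im) {c : ℝ} (h0 : 0 < c) (hc : c ≤ 1/2) :
    0 < (z ^ (c : ℂ)).im := by
  rw [Complex.cpow_ofReal_im]
  have hz0 : z ≠ 0 := by intro h; rw [h] at hz; simp at hz
  refine mul_pos (Real.rpow_pos_of_pos (norm_pos_iff.mpr hz0) _) ?_
  apply Real.sin_pos_of_pos_of_lt_pi (mul_pos (arg_pos_of_im_pos hz) h0)
  nlinarith [Complex.arg_le_pi z, Real.pi_pos, arg_pos_of_im_pos hz]

lemma im_cpow_neg_of_neg_exp {z : ℂ} (hz : 0 < z.im) {c : ℝ} (h0 : c < 0) (hc : -(1/2) ≤ c) :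
    (z ^ (c : ℂ)).im < 0 := by
  rw [Complex.cpow_ofReal_im]
  have hz0 : z ≠ 0 := by intro h; rw [h] at hz; simp at hz
  apply mul_neg_of_pos_of_neg (Real.rpow_pos_of_pos (norm_pos_iff.mpr hz0) _)
  apply Real.sin_neg_of_neg_of_neg_pi_lt (mul_neg_of_pos_of_neg (arg_pos_of_im_pos hz) h0)
  have h1 : Complex.arg z * (-(1/2)) ≤ Complex.arg z * c := by
    gcongr; exact (arg_pos_of_im_pos hz).le
  nlinarith [Complex.arg_le_pi z, Real.pi_pos, arg_pos_of_im_pos hz]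

lemma im_cpow_neg_of_im_neg {z : ℂ} (hz : z.im < 0) {c : ℝ} (h0 : 0 < c) (hc : c ≤ 1/2) :
    (z ^ (c : ℂ)).im < 0 := by
  rw [Complex.cpow_ofReal_im]
  have hz0 : z ≠ 0 := by intro h; rw [h] at hz; simp at hz
  have harg : Complex.arg z < 0 := Complex.arg_neg_iff.2 hz
  apply mul_neg_of_pos_of_neg (Real.rpow_pos_of_pos (norm_pos_iff.mpr hz0) _)
  apply Real.sin_neg_of_neg_of_neg_pi_lt (mul_neg_of_neg_of_pos harg h0)
  nlinarith [Complex.neg_pi_lt_arg z, Real.pi_pos]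

lemma im_cpow_pos_of_neg {z : ℂ} (hz : z.im < 0) {c : ℝ} (h0 : c < 0) (hc : -(1/2) ≤ c) :
    0 < (z ^ (c : ℂ)).im := by
  rw [Complex.cpow_ofReal_im]
  have hz0 : z ≠ 0 := by intro h; rw [h] at hz; simp at hz
  have harg : Complex.arg z < 0 := Complex.arg_neg_iff.2 hz
  refine mul_pos (Real.rpow_pos_of_pos (norm_pos_iff.mpr hz0) _) ?_
  apply Real.sin_pos_of_pos_of_lt_pi (mul_pos_of_neg_of_neg harg h0)
  nlinarith [Complex.neg_pi_lt_arg z, Real.pi_pos]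

lemma im_cpow_zero {z : ℂ} (h1 : z.im = 0) (h2 : 0 < z.re) (c : ℝ) : (z ^ (c : ℂ)).im = 0 := by
  rw [Complex.cpow_ofReal_im]
  have : Complex.arg z = 0 := Complex.arg_eq_zero_iff.2 ⟨h2.le, h1⟩
  simp [this]

noncomputable def wk (k : ℕ) (t : ℝ) : ℝ := (1 + t) ^ (-(k : ℝ) - 3 / 2)

lemma wk_nonneg (k : ℕ) {t : ℝ} (ht : 0 ≤ t) : 0 ≤ wk k t :=
  Real.rpow_nonneg (by linarith) _

lemma int2 : IntegrableOn (fun t : ℝ => (1 + t) ^ (-(2:ℝ))) (Set.Ioi (0:ℝ)) := by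
  have h : IntegrableOn (fun x : ℝ => (1 + ‖x‖) ^ (-(2:ℝ))) (Set.Ioi (0:ℝ)) :=
    (integrable_one_add_norm (by norm_num)).restrict
  apply h.congr_fun ?_ measurableSet_Ioi
  intro t ht
  simp only [Real.norm_eq_abs, abs_of_pos (mem_Ioi.1 ht)]

lemma int_helper {E : Type*} [NormedAddCommGroup E] {f : ℝ → E} {C : ℝ}
    (hm : AEStronglyMeasurable f (volume.restrict (Set.Ioi 0)))
    (hb : ∀ t ∈ Set.Ioi (0:ℝ), ‖f t‖ ≤ C * (1 + t) ^ (-(2:ℝ))) :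
    IntegrableOn f (Set.Ioi (0:ℝ)) := by
  apply Integrable.mono (int2.const_mul C) hm
  rw [ae_restrict_iff' measurableSet_Ioi]
  filter_upwards with t ht
  refine (hb t ht).trans ?_
  rw [Real.norm_eq_abs, abs_mul]
  gcongr
  · exact Real.rpow_nonneg (by simp only [mem_Ioi] at ht; linarith) _
  · exact le_abs_self C
  · exact le_abs_self _

lemma wk_int (k : ℕ) (hk : 1 ≤ k) : IntegrableOn (fun t => wk k t) (Set.Ioi (0:ℝ)) := by
  apply int_helper (C := 1)
  · apply (ContinuousOn.aestronglyMeasurable ?_ measurableSet_Ioi)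
    intro t ht
    apply ContinuousAt.continuousWithinAt
    exact (continuousAt_const.add continuousAt_id).rpow_const (Or.inl (by simp at ht; exact (show (0:ℝ) < 1 + t by linarith).ne'))
  · intro t ht
    simp only [mem_Ioi] at ht
    rw [Real.norm_eq_abs, _root_.abs_of_nonneg (wk_nonneg k ht.le), one_mul, wk]
    apply Real.rpow_le_rpow_of_exponent_le (by linarith)
    have : (1:ℝ) ≤ (k:ℝ) := by exact_mod_cast hk
    linarith


noncomputable def Fk (k : ℕ) (z : ℂ) (t : ℝ) : ℂ :=
  (z + (t : ℂ)) ^ ((1 : ℂ) / 2) * ((wk k t : ℝ) : ℂ)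

noncomputable def Fk' (k : ℕ) (z : ℂ) (t : ℝ) : ℂ :=
  (1 : ℂ) / 2 * ((z + (t : ℂ)) ^ ((1 : ℂ) / 2 - 1) * ((wk k t : ℝ) : ℂ))

lemma add_mem_slit {z : ℂ} (hz : z ∈ Complex.slitPlane) {t : ℝ} (ht : 0 ≤ t) :
    z + (t : ℂ) ∈ Complex.slitPlane := by
  rcases Complex.mem_slitPlane_iff.1 hz with h | h
  · exact Complex.mem_slitPlane_iff.2 (Or.inl (by simp; linarith))
  · exact Complex.mem_slitPlane_iff.2 (Or.inr (by simpa using h))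

lemma contOnAux {z : ℂ} (hz : z ∈ Complex.slitPlane) (k : ℕ) (e : ℂ) :
    ContinuousOn (fun t : ℝ => (z + (t : ℂ)) ^ e * ((wk k t : ℝ) : ℂ)) (Set.Ioi (0:ℝ)) := by
  intro t ht
  simp only [mem_Ioi] at ht
  apply ContinuousAt.continuousWithinAt
  apply ContinuousAt.mul
  · exact ContinuousAt.cpow ((continuous_const.add Complex.continuous_ofReal).continuousAt)
      continuousAt_const (add_mem_slit hz ht.le)
  · apply Complex.continuous_ofReal.continuousAt.comp
    exact (continuousAt_const.add continuousAt_id).rpow_const (Or.inl (by exact (show (0:ℝ) < 1 + t by linarith).ne'))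

lemma normFk {z : ℂ} (k : ℕ) {t : ℝ} (ht : 0 ≤ t) :
    ‖Fk k z t‖ = ‖z + (t:ℂ)‖ ^ ((1:ℝ)/2) * wk k t := by
  have e1 : ((1:ℂ)/2 : ℂ) = (((1:ℝ)/2 : ℝ) : ℂ) := by norm_num
  rw [Fk, norm_mul, e1, Complex.norm_cpow_real, Complex.norm_real,
    Real.norm_eq_abs, wk, _root_.abs_of_nonneg (Real.rpow_nonneg (by linarith) _), ← wk]

lemma abs_add_le' (z : ℂ) {t : ℝ} (ht : 0 ≤ t) :
    ‖z + (t:ℂ)‖ ≤ (1 + ‖z‖) * (1 + t) := by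
  calc ‖z + (t:ℂ)‖ ≤ ‖z‖ + ‖(t:ℂ)‖ := norm_add_le z _
    _ = ‖z‖ + t := by rw [Complex.norm_real, Real.norm_eq_abs, _root_.abs_of_nonneg ht]
    _ ≤ (1 + ‖z‖) * (1 + t) := by nlinarith [norm_nonneg z]

lemma Fk_bound {z : ℂ} (k : ℕ) (hk : 1 ≤ k) {t : ℝ} (ht : 0 < t) :
    ‖Fk k z t‖ ≤ (1 + ‖z‖) ^ ((1:ℝ)/2) * (1 + t) ^ (-(2:ℝ)) := by
  rw [normFk k ht.le]
  have h1 : ‖z + (t:ℂ)‖ ^ ((1:ℝ)/2) ≤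
      (1 + ‖z‖) ^ ((1:ℝ)/2) * (1 + t) ^ ((1:ℝ)/2) := by
    rw [← Real.mul_rpow (by positivity) (by linarith)]
    exact Real.rpow_le_rpow (norm_nonneg _) (abs_add_le' z ht.le) (by norm_num)
  have h2 : (1 + t) ^ ((1:ℝ)/2) * wk k t ≤ (1 + t) ^ (-(2:ℝ)) := by
    rw [wk, ← Real.rpow_add (by linarith)]
    apply Real.rpow_le_rpow_of_exponent_le (by linarith)
    have : (1:ℝ) ≤ (k:ℝ) := by exact_mod_cast hk
    linarith
  calc ‖z + (t:ℂ)‖ ^ ((1:ℝ)/2) * wk k t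
      ≤ ((1 + ‖z‖) ^ ((1:ℝ)/2) * (1 + t) ^ ((1:ℝ)/2)) * wk k t := by
        apply mul_le_mul_of_nonneg_right h1 (Real.rpow_nonneg (by linarith) _)
    _ = (1 + ‖z‖) ^ ((1:ℝ)/2) * ((1 + t) ^ ((1:ℝ)/2) * wk k t) := by ring
    _ ≤ (1 + ‖z‖) ^ ((1:ℝ)/2) * (1 + t) ^ (-(2:ℝ)) := by
        apply mul_le_mul_of_nonneg_left h2 (by positivity)

lemma Fk_meas {z : ℂ} (hz : z ∈ Complex.slitPlane) (k : ℕ) :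
    AEStronglyMeasurable (fun t => Fk k z t) (volume.restrict (Set.Ioi 0)) :=
  (contOnAux hz k ((1:ℂ)/2)).aestronglyMeasurable measurableSet_Ioi

lemma Fk_int {z : ℂ} (hz : z ∈ Complex.slitPlane) (k : ℕ) (hk : 1 ≤ k) :
    IntegrableOn (fun t => Fk k z t) (Set.Ioi (0:ℝ)) := by
  apply int_helper (Fk_meas hz k)
  exact fun t ht => Fk_bound k hk (mem_Ioi.1 ht)

lemma re_integral_nonneg {f : ℝ → ℂ} (h : ∀ t ∈ Set.Ioi (0:ℝ), 0 ≤ (f t).re) :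
    0 ≤ (∫ t in Set.Ioi (0:ℝ), f t).re := by
  by_cases hf : Integrable f (volume.restrict (Set.Ioi (0:ℝ)))
  · have hc := Complex.reCLM.integral_comp_comm hf
    simp only [Complex.reCLM_apply] at hc
    rw [← hc]
    exact setIntegral_nonneg measurableSet_Ioi h
  · rw [integral_undef hf]; simp

lemma im_integral_nonneg {f : ℝ → ℂ} (h : ∀ t ∈ Set.Ioi (0:ℝ), 0 ≤ (f t).im) :
    0 ≤ (∫ t in Set.Ioi (0:ℝ), f t).im := by
  by_cases hf : Integrable f (volume.restrict (Set.Ioi (0:ℝ)))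
  · have hc := Complex.imCLM.integral_comp_comm hf
    simp only [Complex.imCLM_apply] at hc
    rw [← hc]
    exact setIntegral_nonneg measurableSet_Ioi h
  · rw [integral_undef hf]; simp

lemma im_integral_nonpos {f : ℝ → ℂ} (h : ∀ t ∈ Set.Ioi (0:ℝ), (f t).im ≤ 0) :
    (∫ t in Set.Ioi (0:ℝ), f t).im ≤ 0 := by
  have := im_integral_nonneg (f := fun t => -f t) (fun t ht => by simpa using h t ht)
  rw [integral_neg] at this
  simpa using this

lemma im_integral_zero {f : ℝ → ℂ} (h : ∀ t ∈ Set.Ioi (0:ℝ), (f t).im = 0) :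
    (∫ t in Set.Ioi (0:ℝ), f t).im = 0 :=
  le_antisymm (im_integral_nonpos fun t ht => (h t ht).le)
    (im_integral_nonneg fun t ht => (h t ht).ge)

lemma slit_of_not {z : ℂ} (h : ¬(z.im = 0 ∧ z.re ≤ 0)) : z ∈ Complex.slitPlane := by
  rw [Complex.mem_slitPlane_iff]
  by_cases him : z.im = 0
  · left; by_contra hre; exact h ⟨him, not_lt.1 hre⟩
  · right; exact him

lemma not_of_slit {z : ℂ} (h : z ∈ Complex.slitPlane) : ¬(z.im = 0 ∧ z.re ≤ 0) := by
  rintro ⟨h1, h2⟩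
  rcases Complex.mem_slitPlane_iff.1 h with h3 | h3
  · linarith
  · exact h3 h1

set_option maxHeartbeats 1000000 in
lemma hasDeriv_int (k : ℕ) (hk : 1 ≤ k) {z₀ : ℂ} (hz : z₀ ∈ Complex.slitPlane) :
    Integrable (Fk' k z₀) (volume.restrict (Set.Ioi (0:ℝ))) ∧
      HasDerivAt (fun z => ∫ t in Set.Ioi (0:ℝ), Fk k z t)
        (∫ t in Set.Ioi (0:ℝ), Fk' k z₀ t) z₀ := by
  classical
  set Cs : Set ℂ := {w : ℂ | w.im = 0 ∧ w.re ≤ 0} with hCs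
  have hCc : IsClosed Cs := by
    have : Cs = (Complex.im ⁻¹' {0}) ∩ (Complex.re ⁻¹' Set.Iic 0) := by
      ext w; simp [hCs]
    rw [this]
    exact (isClosed_singleton.preimage Complex.continuous_im).inter
      (isClosed_Iic.preimage Complex.continuous_re)
  have hz₀C : z₀ ∉ Cs := not_of_slit hz
  set ε : ℝ := infDist z₀ Cs with hε
  have hε0 : 0 < ε := (hCc.notMem_iff_infDist_pos ⟨0, by simp [hCs]⟩).1 hz₀C
  -- points of the ball are in the slit plane, and z + t stays away from 0
  have hball : ∀ z ∈ Metric.ball z₀ (ε/2), z ∈ Complex.slitPlane := by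
    intro z hzb
    apply slit_of_not
    intro hmem
    have h1 : ε ≤ dist z₀ z := infDist_le_dist_of_mem (show z ∈ Cs from hmem)
    have := mem_ball.1 hzb
    rw [dist_comm] at this
    linarith
  have hfar : ∀ z ∈ Metric.ball z₀ (ε/2), ∀ t : ℝ, 0 ≤ t → ε/2 ≤ ‖z + (t:ℂ)‖ := by
    intro z hzb t ht
    have hmem : (-(t:ℂ)) ∈ Cs := by
      refine ⟨by simp, ?_⟩
      simp only [Complex.neg_re, Complex.ofReal_re]
      linarith
    have h1 : ε ≤ dist z₀ (-(t:ℂ)) := infDist_le_dist_of_mem hmem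
    have h2 : dist z₀ (-(t:ℂ)) ≤ dist z₀ z + dist z (-(t:ℂ)) := dist_triangle _ _ _
    have h3 : dist z (-(t:ℂ)) = ‖z + (t:ℂ)‖ := by
      rw [Complex.dist_eq]; ring_nf
    have h4 : dist z₀ z < ε/2 := by rw [dist_comm]; exact mem_ball.1 hzb
    linarith
  have e2 : ((1:ℂ)/2 - 1 : ℂ) = ((-(1/2) : ℝ) : ℂ) := by push_cast; ring
  -- the uniform bound
  set M : ℝ := (1/2) * (ε/2) ^ (-(1/2) : ℝ) with hM
  have hFk'_norm : ∀ z ∈ Metric.ball z₀ (ε/2), ∀ t : ℝ, 0 < t →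
      ‖Fk' k z t‖ ≤ M * wk k t := by
    intro z hzb t ht
    rw [Fk', norm_mul, norm_mul, e2,
      Complex.norm_cpow_real, Complex.norm_real, Real.norm_eq_abs,
      _root_.abs_of_nonneg (wk_nonneg k ht.le)]
    have habs : ‖(1:ℂ)/2‖ = 1/2 := by norm_num
    rw [habs, hM]
    have hε2 : (0:ℝ) < ε/2 := by linarith
    have hb : ‖z + (t:ℂ)‖ ^ (-(1/2):ℝ) ≤ (ε/2) ^ (-(1/2):ℝ) := by
      rw [Real.rpow_neg (norm_nonneg _), Real.rpow_neg hε2.le]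
      exact inv_anti₀ (Real.rpow_pos_of_pos hε2 _)
        (Real.rpow_le_rpow hε2.le (hfar z hzb t ht.le) (by norm_num))
    calc (1/2) * (‖z + (t:ℂ)‖ ^ (-(1/2):ℝ) * wk k t)
        ≤ (1/2) * ((ε/2) ^ (-(1/2):ℝ) * wk k t) := by
          apply mul_le_mul_of_nonneg_left _ (by norm_num)
          exact mul_le_mul_of_nonneg_right hb (wk_nonneg k ht.le)
      _ = 1/2 * (ε/2) ^ (-(1/2):ℝ) * wk k t := by ring
  have key := hasDerivAt_integral_of_dominated_loc_of_deriv_le (F := fun z t => Fk k z t)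
      (F' := fun z t => Fk' k z t) (x₀ := z₀) (bound := fun t => M * wk k t)
      (Metric.ball_mem_nhds z₀ (half_pos hε0))
      (Filter.eventually_of_mem (Metric.ball_mem_nhds z₀ (half_pos hε0))
        (fun z hzb => Fk_meas (hball z hzb) k))
      (Fk_int hz k hk)
      (((continuousOn_const.mul (contOnAux hz k ((1:ℂ)/2 - 1)))).aestronglyMeasurable
        measurableSet_Ioi)
      ?_ ((wk_int k hk).const_mul M) ?_
  · exact key
  · rw [ae_restrict_iff' measurableSet_Ioi]
    filter_upwards with t ht
    exact fun z hzb => hFk'_norm z hzb t (mem_Ioi.1 ht)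
  · rw [ae_restrict_iff' measurableSet_Ioi]
    filter_upwards with t ht
    intro z hzb
    have hslit : z + (t:ℂ) ∈ Complex.slitPlane := add_mem_slit (hball z hzb) (mem_Ioi.1 ht).le
    have hd : HasDerivAt (fun z : ℂ => (z + (t:ℂ)) ^ ((1:ℂ)/2))
        ((1:ℂ)/2 * (z + (t:ℂ)) ^ ((1:ℂ)/2 - 1) * 1) z :=
      HasDerivAt.cpow_const ((hasDerivAt_id z).add_const _) hslit
    have := hd.mul_const ((wk k t : ℝ) : ℂ)
    have e : Fk' k z t = (1:ℂ)/2 * (z + (t:ℂ)) ^ ((1:ℂ)/2 - 1) * 1 * ((wk k t : ℝ) : ℂ) := by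
      rw [Fk']; ring
    rw [e]; exact this

noncomputable def cst (k : ℕ) : ℂ := ((k : ℂ) - 1 / 2) / ((k : ℂ) + 1 / 2)
noncomputable def c0 (k : ℕ) : ℝ := ((k : ℝ) - 1 / 2) / ((k : ℝ) + 1 / 2)

lemma cst_eq (k : ℕ) : cst k = ((c0 k : ℝ) : ℂ) := by
  rw [cst, c0]; push_cast; ring

lemma c0_pos {k : ℕ} (hk : 1 ≤ k) : 0 < c0 k := by
  have : (1:ℝ) ≤ (k:ℝ) := by exact_mod_cast hk
  rw [c0]
  apply div_pos <;> linarith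

noncomputable def Psi (k : ℕ) : ℂ → ℂ := fun z =>
  cst k * z ^ ((1:ℂ)/2) + ∫ t in Set.Ioi (0:ℝ), Fk k z t

noncomputable def PsiD (k : ℕ) : ℂ → ℂ := fun z =>
  cst k * ((1:ℂ)/2 * z ^ ((1:ℂ)/2 - 1)) + ∫ t in Set.Ioi (0:ℝ), Fk' k z t

lemma Psi_hasDerivAt (k : ℕ) (hk : 1 ≤ k) {z : ℂ} (hz : z ∈ Complex.slitPlane) :
    HasDerivAt (Psi k) (PsiD k z) z :=
  (((Complex.hasStrictDerivAt_cpow_const hz).hasDerivAt.const_mul (cst k)).add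
    (hasDeriv_int k hk hz).2)

lemma deriv_Psi (k : ℕ) (hk : 1 ≤ k) {z : ℂ} (hz : z ∈ Complex.slitPlane) :
    deriv (Psi k) z = PsiD k z :=
  (Psi_hasDerivAt k hk hz).deriv

lemma mul_ofReal_re (X : ℂ) (r : ℝ) : (X * (r:ℂ)).re = X.re * r := by
  simp [Complex.mul_re]

lemma mul_ofReal_im (X : ℂ) (r : ℝ) : (X * (r:ℂ)).im = X.im * r := by
  simp [Complex.mul_im]

lemma e1' : ((1:ℂ)/2 : ℂ) = (((1:ℝ)/2 : ℝ) : ℂ) := by norm_num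
lemma e2' : ((1:ℂ)/2 - 1 : ℂ) = ((-(1/2) : ℝ) : ℂ) := by push_cast; ring

lemma psi_re_pos (k : ℕ) (hk : 1 ≤ k) {z : ℂ} (hz : z ∈ Complex.slitPlane) :
    0 < (Psi k z).re := by
  simp only [Psi, Complex.add_re]
  have h1 : (cst k * z ^ ((1:ℂ)/2)).re = c0 k * (z ^ ((1:ℂ)/2)).re := by
    rw [cst_eq, Complex.re_ofReal_mul]
  have h2 : 0 < (z ^ ((1:ℂ)/2)).re := by
    rw [e1']; exact re_cpow_pos hz (by rw [abs_le]; constructor <;> norm_num)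
  have h3 : 0 ≤ (∫ t in Set.Ioi (0:ℝ), Fk k z t).re := by
    apply re_integral_nonneg
    intro t ht
    rw [Fk, mul_ofReal_re]
    apply mul_nonneg _ (wk_nonneg k (mem_Ioi.1 ht).le)
    rw [e1']
    exact (re_cpow_pos (add_mem_slit hz (mem_Ioi.1 ht).le) (by rw [abs_le]; constructor <;> norm_num)).le
  have := mul_pos (c0_pos hk) h2
  rw [h1]
  linarith

lemma psi_im_pos (k : ℕ) (hk : 1 ≤ k) {z : ℂ} (hz : 0 < z.im) : 0 < (Psi k z).im := by
  have hzs : z ∈ Complex.slitPlane := Complex.mem_slitPlane_iff.2 (Or.inr (by linarith))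
  simp only [Psi, Complex.add_im]
  have h1 : (cst k * z ^ ((1:ℂ)/2)).im = c0 k * (z ^ ((1:ℂ)/2)).im := by
    rw [cst_eq, Complex.im_ofReal_mul]
  have h2 : 0 < (z ^ ((1:ℂ)/2)).im := by
    rw [e1']; exact im_cpow_pos hz (by norm_num) (by norm_num)
  have h3 : 0 ≤ (∫ t in Set.Ioi (0:ℝ), Fk k z t).im := by
    apply im_integral_nonneg
    intro t ht
    rw [Fk, mul_ofReal_im]
    apply mul_nonneg _ (wk_nonneg k (mem_Ioi.1 ht).le)
    rw [e1']
    exact (im_cpow_pos (by simpa using hz) (by norm_num) (by norm_num)).le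
  have := mul_pos (c0_pos hk) h2
  rw [h1]
  linarith

lemma psi_im_neg (k : ℕ) (hk : 1 ≤ k) {z : ℂ} (hz : z.im < 0) : (Psi k z).im < 0 := by
  simp only [Psi, Complex.add_im]
  have h1 : (cst k * z ^ ((1:ℂ)/2)).im = c0 k * (z ^ ((1:ℂ)/2)).im := by
    rw [cst_eq, Complex.im_ofReal_mul]
  have h2 : (z ^ ((1:ℂ)/2)).im < 0 := by
    rw [e1']; exact im_cpow_neg_of_im_neg hz (by norm_num) (by norm_num)
  have h3 : (∫ t in Set.Ioi (0:ℝ), Fk k z t).im ≤ 0 := by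
    apply im_integral_nonpos
    intro t ht
    rw [Fk, mul_ofReal_im]
    apply mul_nonpos_of_nonpos_of_nonneg _ (wk_nonneg k (mem_Ioi.1 ht).le)
    rw [e1']
    exact (im_cpow_neg_of_im_neg (by simpa using hz) (by norm_num) (by norm_num)).le
  have := mul_neg_of_pos_of_neg (c0_pos hk) h2
  rw [h1]
  linarith

lemma psi_im_zero (k : ℕ) {z : ℂ} (h1 : z.im = 0) (h2 : 0 < z.re) : (Psi k z).im = 0 := by
  simp only [Psi, Complex.add_im]
  have ha : (cst k * z ^ ((1:ℂ)/2)).im = c0 k * (z ^ ((1:ℂ)/2)).im := by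
    rw [cst_eq, Complex.im_ofReal_mul]
  have hb : (z ^ ((1:ℂ)/2)).im = 0 := by
    rw [e1']; exact im_cpow_zero h1 h2 _
  have hc : (∫ t in Set.Ioi (0:ℝ), Fk k z t).im = 0 := by
    apply im_integral_zero
    intro t ht
    rw [Fk, mul_ofReal_im, e1',
      im_cpow_zero (by simpa using h1) (by simp; linarith [mem_Ioi.1 ht]) _, zero_mul]
  rw [ha, hb, hc, mul_zero, add_zero]

lemma psiD_re_pos (k : ℕ) (hk : 1 ≤ k) {z : ℂ} (hz : z ∈ Complex.slitPlane) :
    0 < (PsiD k z).re := by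
  simp only [PsiD, Complex.add_re]
  have h1 : cst k * ((1:ℂ)/2 * z ^ ((1:ℂ)/2 - 1)) =
      ((c0 k / 2 : ℝ) : ℂ) * z ^ ((1:ℂ)/2 - 1) := by
    rw [cst_eq]; push_cast; ring
  have h2 : 0 < (z ^ ((1:ℂ)/2 - 1)).re := by
    rw [e2']; exact re_cpow_pos hz (by rw [abs_le]; constructor <;> norm_num)
  have h3 : 0 ≤ (∫ t in Set.Ioi (0:ℝ), Fk' k z t).re := by
    apply re_integral_nonneg
    intro t ht
    rw [Fk', e2', e1', Complex.re_ofReal_mul, mul_ofReal_re]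
    apply mul_nonneg (by norm_num)
    apply mul_nonneg _ (wk_nonneg k (mem_Ioi.1 ht).le)
    exact (re_cpow_pos (add_mem_slit hz (mem_Ioi.1 ht).le) (by rw [abs_le]; constructor <;> norm_num)).le
  rw [h1, Complex.re_ofReal_mul]
  have := mul_pos (half_pos (c0_pos hk)) h2
  linarith

lemma psiD_im_neg (k : ℕ) (hk : 1 ≤ k) {z : ℂ} (hz : 0 < z.im) : (PsiD k z).im < 0 := by
  have hzs : z ∈ Complex.slitPlane := Complex.mem_slitPlane_iff.2 (Or.inr (by linarith))
  simp only [PsiD, Complex.add_im]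
  have h1 : cst k * ((1:ℂ)/2 * z ^ ((1:ℂ)/2 - 1)) =
      ((c0 k / 2 : ℝ) : ℂ) * z ^ ((1:ℂ)/2 - 1) := by
    rw [cst_eq]; push_cast; ring
  have h2 : (z ^ ((1:ℂ)/2 - 1)).im < 0 := by
    rw [e2']; exact im_cpow_neg_of_neg_exp hz (by norm_num) (by norm_num)
  have h3 : (∫ t in Set.Ioi (0:ℝ), Fk' k z t).im ≤ 0 := by
    apply im_integral_nonpos
    intro t ht
    rw [Fk', e2', e1', Complex.im_ofReal_mul, mul_ofReal_im]
    apply mul_nonpos_of_nonneg_of_nonpos (by norm_num)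
    apply mul_nonpos_of_nonpos_of_nonneg _ (wk_nonneg k (mem_Ioi.1 ht).le)
    exact (im_cpow_neg_of_neg_exp (by simpa using hz) (by norm_num) (by norm_num)).le
  rw [h1, Complex.im_ofReal_mul]
  have := mul_neg_of_pos_of_neg (half_pos (c0_pos hk)) h2
  linarith

lemma arg_ne_pi {z : ℂ} (hz : z ∈ Complex.slitPlane) : z.arg ≠ π := by
  intro h
  obtain ⟨h1, h2⟩ := Complex.arg_eq_pi_iff.1 h
  rcases Complex.mem_slitPlane_iff.1 hz with h3 | h3
  · linarith
  · exact h3 h2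

lemma conj_half : (starRingEnd ℂ) ((1:ℂ)/2) = (1:ℂ)/2 := by
  rw [map_div₀, map_one, map_ofNat]

lemma conj_cpow_half {z : ℂ} (hz : z ∈ Complex.slitPlane) :
    (starRingEnd ℂ z) ^ ((1:ℂ)/2) = starRingEnd ℂ (z ^ ((1:ℂ)/2)) := by
  rw [Complex.conj_cpow z _ (arg_ne_pi hz), conj_half]

lemma psi_conj (k : ℕ) {z : ℂ} (hz : z ∈ Complex.slitPlane) :
    Psi k (starRingEnd ℂ z) = starRingEnd ℂ (Psi k z) := by
  simp only [Psi]
  rw [map_add, map_mul]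
  congr 1
  · rw [conj_cpow_half hz, show (starRingEnd ℂ) (cst k) = cst k by
      rw [cst_eq, Complex.conj_ofReal]]
  · have hcongr : ∀ t ∈ Set.Ioi (0:ℝ), Fk k (starRingEnd ℂ z) t = starRingEnd ℂ (Fk k z t) := by
      intro t ht
      have h1 : starRingEnd ℂ z + (t:ℂ) = starRingEnd ℂ (z + (t:ℂ)) := by
        rw [map_add, Complex.conj_ofReal]
      rw [Fk, Fk, h1, conj_cpow_half (add_mem_slit hz (mem_Ioi.1 ht).le), map_mul,
        Complex.conj_ofReal]
    rw [setIntegral_congr_fun measurableSet_Ioi hcongr, integral_conj]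

lemma contDeriv (k : ℕ) (hk : 1 ≤ k) : ContinuousOn (deriv (Psi k)) Complex.slitPlane := by
  have hd : DifferentiableOn ℂ (Psi k) Complex.slitPlane := fun z hz =>
    (Psi_hasDerivAt k hk hz).differentiableAt.differentiableWithinAt
  exact ((hd.analyticOnNhd Complex.isOpen_slitPlane).deriv).continuousOn

lemma injOn_aux {f f' : ℂ → ℂ} {s : Set ℂ} (hs : Convex ℝ s)
    (hd : ∀ z ∈ s, HasDerivAt f (f' z) z) (hc : ContinuousOn f' s)
    (hre : ∀ z ∈ s, 0 < (f' z).re) : Set.InjOn f s := by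
  intro a ha b hb hab
  by_contra hne
  set γ : ℝ → ℂ := fun t => a + (t:ℂ) * (b - a) with hγ
  have hγc : Continuous γ := by
    exact continuous_const.add (Complex.continuous_ofReal.mul continuous_const)
  have hmem : ∀ t ∈ Set.Icc (0:ℝ) 1, γ t ∈ s := by
    intro t ht
    have h := hs ha hb (by linarith [ht.2] : 0 ≤ 1 - t) ht.1 (by ring)
    have heq : γ t = (1-t) • a + t • b := by
      simp only [hγ, Complex.real_smul]
      push_cast
      ring
    rw [heq]; exact h
  have hγd : ∀ t : ℝ, HasDerivAt γ (b - a) t := by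
    intro t
    have h1 : HasDerivAt (fun t : ℝ => (t:ℂ)) 1 t := by simpa using (hasDerivAt_id t).ofReal_comp
    simpa [hγ] using (h1.mul_const (b - a)).const_add a
  have huIcc : Set.uIcc (0:ℝ) 1 = Set.Icc 0 1 := Set.uIcc_of_le zero_le_one
  have hcomp : ∀ t ∈ Set.uIcc (0:ℝ) 1, HasDerivAt (f ∘ γ) (f' (γ t) * (b - a)) t := by
    intro t ht
    rw [huIcc] at ht
    exact (hd (γ t) (hmem t ht)).comp t (hγd t)
  have hmaps : Set.MapsTo γ (Set.uIcc (0:ℝ) 1) s := by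
    rw [huIcc]; exact fun t ht => hmem t ht
  have hcont : ContinuousOn (fun t => f' (γ t)) (Set.uIcc (0:ℝ) 1) :=
    hc.comp hγc.continuousOn hmaps
  have hint : IntervalIntegrable (fun t => f' (γ t) * (b - a)) volume 0 1 :=
    (hcont.mul continuousOn_const).intervalIntegrable
  have heval := intervalIntegral.integral_eq_sub_of_hasDerivAt hcomp hint
  have hγ1 : γ 1 = b := by simp [hγ]
  have hγ0 : γ 0 = a := by simp [hγ]
  have hzero : (∫ t in (0:ℝ)..1, f' (γ t)) * (b - a) = 0 := by
    rw [← intervalIntegral.integral_mul_const, heval]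
    simp [Function.comp, hγ1, hγ0, hab]
  have hI : (∫ t in (0:ℝ)..1, f' (γ t)) = 0 := by
    rcases mul_eq_zero.1 hzero with h | h
    · exact h
    · exact absurd (by rw [sub_eq_zero] at h; exact h.symm) hne
  have hint2 : IntervalIntegrable (fun t => f' (γ t)) volume 0 1 := hcont.intervalIntegrable
  have hre2 := Complex.reCLM.intervalIntegral_comp_comm hint2
  simp only [Complex.reCLM_apply] at hre2
  have hpos : 0 < ∫ t in (0:ℝ)..1, (f' (γ t)).re := by
    apply intervalIntegral.intervalIntegral_pos_of_pos_on
    · exact (Complex.continuous_re.comp_continuousOn hcont).intervalIntegrable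
    · intro t ht
      exact hre (γ t) (hmem t ⟨ht.1.le, ht.2.le⟩)
    · norm_num
  rw [hre2, hI] at hpos
  simp at hpos


/-- The function
`ψ_k(z) = ((k−1/2)/(k+1/2))√z + ∫₀^∞ √(z+t)(1+t)^{−k−3/2} dt` satisfies, on the open
upper half-plane, `Re ψ_k > 0`, `Im ψ_k > 0`, `Re ψ_k′ > 0`, `Im ψ_k′ < 0`; it is
conjugation-symmetric on `ℂ \ (−∞, 0]`, maps `(0, ∞)` into `(0, ∞)`, and is
injective on `ℂ \ (−∞, 0]`; consequently `φ_k = ψ_k²` is injective there. -/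
theorem stmt_14 (k : ℕ) (hk : 1 ≤ k) (ψ : ℂ → ℂ)
    (hψ : ∀ z : ℂ, ψ z =
      (((k : ℂ) - 1 / 2) / ((k : ℂ) + 1 / 2)) * z ^ ((1 : ℂ) / 2) +
        ∫ t in Set.Ioi (0 : ℝ),
          (z + (t : ℂ)) ^ ((1 : ℂ) / 2) * (((1 + t) ^ (-(k : ℝ) - 3 / 2) : ℝ) : ℂ)) :
    (∀ z : ℂ, 0 < z.im →
      0 < (ψ z).re ∧ 0 < (ψ z).im ∧ 0 < (deriv ψ z).re ∧ (deriv ψ z).im < 0) ∧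
    (∀ z : ℂ, ¬(z.im = 0 ∧ z.re ≤ 0) → ψ (starRingEnd ℂ z) = starRingEnd ℂ (ψ z)) ∧
    (∀ x : ℝ, 0 < x → (ψ (x : ℂ)).im = 0 ∧ 0 < (ψ (x : ℂ)).re) ∧
    Set.InjOn ψ {z : ℂ | ¬(z.im = 0 ∧ z.re ≤ 0)} ∧
    Set.InjOn (fun z => ψ z ^ 2) {z : ℂ | ¬(z.im = 0 ∧ z.re ≤ 0)} := by
  have hΨ : ψ = Psi k := funext hψ
  subst hΨ
  have hUHPslit : ∀ z : ℂ, 0 < z.im → z ∈ Complex.slitPlane := fun z hz =>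
    Complex.mem_slitPlane_iff.2 (Or.inr (by intro h; rw [h] at hz; exact lt_irrefl 0 hz))
  have hLHPslit : ∀ z : ℂ, z.im < 0 → z ∈ Complex.slitPlane := fun z hz =>
    Complex.mem_slitPlane_iff.2 (Or.inr (by intro h; rw [h] at hz; exact lt_irrefl 0 hz))
  have hder : ∀ z ∈ Complex.slitPlane, HasDerivAt (Psi k) (deriv (Psi k) z) z := by
    intro z hz; rw [deriv_Psi k hk hz]; exact Psi_hasDerivAt k hk hz
  have hrepos : ∀ z ∈ Complex.slitPlane, 0 < (deriv (Psi k) z).re := by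
    intro z hz; rw [deriv_Psi k hk hz]; exact psiD_re_pos k hk hz
  have hcd := contDeriv k hk
  have hinjU : Set.InjOn (Psi k) {z : ℂ | 0 < z.im} :=
    injOn_aux (convex_halfSpace_im_gt 0) (fun z hz => hder z (hUHPslit z hz))
      (hcd.mono (fun z hz => hUHPslit z hz)) (fun z hz => hrepos z (hUHPslit z hz))
  have hinjL : Set.InjOn (Psi k) {z : ℂ | z.im < 0} :=
    injOn_aux (convex_halfSpace_im_lt 0) (fun z hz => hder z (hLHPslit z hz))
      (hcd.mono (fun z hz => hLHPslit z hz)) (fun z hz => hrepos z (hLHPslit z hz))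
  have hconv0 : Convex ℝ {z : ℂ | z.im = 0 ∧ 0 < z.re} := by
    have hEq : {z : ℂ | z.im = 0 ∧ 0 < z.re} =
        ({z : ℂ | z.im ≤ 0} ∩ {z : ℂ | (0:ℝ) ≤ z.im}) ∩ {z : ℂ | (0:ℝ) < z.re} := by
      ext w
      constructor
      · rintro ⟨h1, h2⟩; exact ⟨⟨le_of_eq h1, ge_of_eq h1⟩, h2⟩
      · rintro ⟨⟨h1, h2⟩, h3⟩; exact ⟨le_antisymm h1 h2, h3⟩
    rw [hEq]
    exact ((convex_halfSpace_im_le 0).inter (convex_halfSpace_im_ge 0)).inter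
      (convex_halfSpace_re_gt 0)
  have hS0slit : ∀ z : ℂ, z ∈ {z : ℂ | z.im = 0 ∧ 0 < z.re} → z ∈ Complex.slitPlane :=
    fun z hz => Complex.mem_slitPlane_iff.2 (Or.inl hz.2)
  have hinj0 : Set.InjOn (Psi k) {z : ℂ | z.im = 0 ∧ 0 < z.re} :=
    injOn_aux hconv0 (fun z hz => hder z (hS0slit z hz))
      (hcd.mono hS0slit) (fun z hz => hrepos z (hS0slit z hz))
  have hcls : ∀ z : ℂ, ¬(z.im = 0 ∧ z.re ≤ 0) → z.im = 0 → 0 < z.re := by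
    intro z h h0; by_contra h'; exact h ⟨h0, not_lt.1 h'⟩
  have hinj : Set.InjOn (Psi k) {z : ℂ | ¬(z.im = 0 ∧ z.re ≤ 0)} := by
    intro a ha b hb heq
    simp only [Set.mem_setOf_eq] at ha hb
    rcases lt_trichotomy a.im 0 with hA | hA | hA <;>
      rcases lt_trichotomy b.im 0 with hB | hB | hB
    · exact hinjL hA hB heq
    · exfalso
      have h1 := psi_im_neg k hk hA
      have h2 := psi_im_zero k hB (hcls b hb hB)
      rw [heq, h2] at h1; exact lt_irrefl 0 h1
    · exfalso
      have h1 := psi_im_neg k hk hA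
      have h2 := psi_im_pos k hk hB
      rw [heq] at h1; linarith
    · exfalso
      have h1 := psi_im_zero k hA (hcls a ha hA)
      have h2 := psi_im_neg k hk hB
      rw [heq] at h1
      linarith
    · exact hinj0 ⟨hA, hcls a ha hA⟩ ⟨hB, hcls b hb hB⟩ heq
    · exfalso
      have h1 := psi_im_zero k hA (hcls a ha hA)
      have h2 := psi_im_pos k hk hB
      rw [heq] at h1; linarith
    · exfalso
      have h1 := psi_im_pos k hk hA
      have h2 := psi_im_neg k hk hB
      rw [heq] at h1; linarith
    · exfalso
      have h1 := psi_im_pos k hk hA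
      have h2 := psi_im_zero k hB (hcls b hb hB)
      rw [heq, h2] at h1; exact lt_irrefl 0 h1
    · exact hinjU hA hB heq
  refine ⟨?_, ?_, ?_, hinj, ?_⟩
  · intro z hz
    have hzs := hUHPslit z hz
    refine ⟨psi_re_pos k hk hzs, psi_im_pos k hk hz, ?_, ?_⟩
    · rw [deriv_Psi k hk hzs]; exact psiD_re_pos k hk hzs
    · rw [deriv_Psi k hk hzs]; exact psiD_im_neg k hk hz
  · intro z hz
    exact psi_conj k (slit_of_not hz)
  · intro x hx
    have hxs : ((x:ℂ)) ∈ Complex.slitPlane :=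
      Complex.mem_slitPlane_iff.2 (Or.inl (by simpa using hx))
    exact ⟨psi_im_zero k (by simp) (by simpa using hx), psi_re_pos k hk hxs⟩
  · intro a ha b hb heq
    simp only at heq
    have hfac : (Psi k a - Psi k b) * (Psi k a + Psi k b) = 0 := by linear_combination heq
    rcases mul_eq_zero.1 hfac with h | h
    · exact hinj ha hb (sub_eq_zero.1 h)
    · exfalso
      have h1 := psi_re_pos k hk (slit_of_not ha)
      have h2 := psi_re_pos k hk (slit_of_not hb)
      have h3 : (Psi k a + Psi k b).re = 0 := by rw [h]; simp
      rw [Complex.add_re] at h3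
      linarith
end

section
/- Let U ⊆ ℂ be open, let g be holomorphic on U, and let c > 0, ε ∈ (0, 1), and integers n ≥ 1, m ≤ 0 be such that |g(w)| ≤ c|w|^m and |g′(w)| ≤ c|w|^{m+n−1} for all w ∈ U. Then there exists a constant c₁ > 0, depending only on c, ε, m, n, such that for all z, λ ∈ ℂ \ {0} with z ≠ λ: (i) if |z − λ| ≤ ε|λ| and the line segment from λ to z is contained in U, then |(g(z) − g(λ))/(z − λ)| ≤ c₁|z|^{m+n−1}; (ii) if |z − λ| > ε|λ| and z, λ ∈ U, then |(g(z) − g(λ))/(z − λ)| ≤ c₁|z|^{−1}(|z|^m + |λ|^m). -/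
lemma zpow_le_aux {a b r : ℝ} (ha : 0 < a) (hb : 0 < b) (hr : 1 ≤ r)
    (h1 : a ≤ r * b) (h2 : b ≤ r * a) (k : ℤ) :
    a ^ k ≤ r ^ k.natAbs * b ^ k := by
  have hr0 : 0 < r := lt_of_lt_of_le one_pos hr
  rcases le_or_gt 0 k with hk | hk
  · lift k to ℕ using hk
    rw [zpow_natCast, zpow_natCast, Int.natAbs_natCast, ← mul_pow]
    exact pow_le_pow_left₀ ha.le h1 k
  · obtain ⟨j, rfl⟩ : ∃ j : ℕ, k = -(j : ℤ) := ⟨k.natAbs, by omega⟩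
    rw [zpow_neg, zpow_neg, zpow_natCast, zpow_natCast, Int.natAbs_neg, Int.natAbs_natCast]
    rw [inv_le_iff_one_le_mul₀ (pow_pos ha j)]
    have hb' : (0:ℝ) < b ^ j := pow_pos hb j
    have : b ^ j ≤ r ^ j * a ^ j := by
      rw [← mul_pow]; exact pow_le_pow_left₀ hb.le h2 j
    calc (1:ℝ) = b ^ j * (b ^ j)⁻¹ := by field_simp
    _ ≤ (r ^ j * a ^ j) * (b ^ j)⁻¹ := by
        apply mul_le_mul_of_nonneg_right this (by positivity)
    _ = r ^ j * (b ^ j)⁻¹ * a ^ j := by ring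

/-- For `g` holomorphic on an open set `U` with
`|g(w)| ≤ c|w|^m` and `|g′(w)| ≤ c|w|^{m+n−1}` on `U`, there is a constant
`c₁ > 0` depending only on `c, ε, m, n` such that the difference quotient
`(g(z) − g(λ))/(z − λ)` satisfies the dichotomy bound: it is at most
`c₁|z|^{m+n−1}` when `|z − λ| ≤ ε|λ|` and the segment from `λ` to `z` lies in `U`,
and at most `c₁|z|⁻¹(|z|^m + |λ|^m)` when `|z − λ| > ε|λ|` and `z, λ ∈ U`. -/
theorem stmt_18 (c ε : ℝ) (hc : 0 < c) (hε0 : 0 < ε) (hε1 : ε < 1)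
    (n m : ℤ) (hn : 1 ≤ n) (hm : m ≤ 0) :
    ∃ c₁ : ℝ, 0 < c₁ ∧
      ∀ U : Set ℂ, IsOpen U → ∀ g : ℂ → ℂ, DifferentiableOn ℂ g U →
        (∀ w ∈ U, w ≠ 0 → ‖g w‖ ≤ c * ‖w‖ ^ m) →
        (∀ w ∈ U, w ≠ 0 → ‖deriv g w‖ ≤ c * ‖w‖ ^ (m + n - 1)) →
        ∀ z lam : ℂ, z ≠ 0 → lam ≠ 0 → z ≠ lam →
          (‖z - lam‖ ≤ ε * ‖lam‖ → segment ℝ lam z ⊆ U →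
            ‖(g z - g lam) / (z - lam)‖ ≤
              c₁ * ‖z‖ ^ (m + n - 1)) ∧
          (ε * ‖lam‖ < ‖z - lam‖ → z ∈ U → lam ∈ U →
            ‖(g z - g lam) / (z - lam)‖ ≤
              c₁ * (‖z‖)⁻¹ * (‖z‖ ^ m + ‖lam‖ ^ m)) := by
  set k : ℤ := m + n - 1 with hk
  set r : ℝ := (1 + ε) / (1 - ε) with hrdef
  have h1ε : (0:ℝ) < 1 - ε := by linarith
  have hr1 : 1 ≤ r := by
    rw [hrdef, le_div_iff₀ h1ε]; linarith
  have hr0 : 0 < r := lt_of_lt_of_le one_pos hr1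
  refine ⟨c * r ^ k.natAbs + c * (1 + ε) / ε, by positivity, ?_⟩
  intro U hU g hg hgb hgd z lam hz hlam hzlam
  have hzabs : 0 < ‖z‖ := by simpa using hz
  have hlamabs : 0 < ‖lam‖ := by simpa using hlam
  constructor
  · -- Part (i)
    intro hnear hseg
    have hsegdist : ∀ w ∈ segment ℝ lam z, ‖w - lam‖ ≤ ε * ‖lam‖ := by
      intro w hw
      obtain ⟨a, b, ha, hb, hab, rfl⟩ := hw
      have : a • lam + b • z - lam = b • (z - lam) := by
        have : a = 1 - b := by linarith
        subst this
        simp [smul_sub, sub_smul, one_smul]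
        ring
      rw [this, norm_smul, Real.norm_eq_abs, abs_of_nonneg hb]
      calc b * ‖z - lam‖ ≤ 1 * ‖z - lam‖ := by
            apply mul_le_mul_of_nonneg_right (by linarith) (by positivity)
      _ ≤ ε * ‖lam‖ := by rw [one_mul]; exact hnear
    have hsegbound : ∀ w ∈ segment ℝ lam z,
        (1 - ε) * ‖lam‖ ≤ ‖w‖ ∧
        ‖w‖ ≤ (1 + ε) * ‖lam‖ := by
      intro w hw
      have hd := hsegdist w hw
      have h1 : ‖lam‖ ≤ ‖w - lam‖ + ‖w‖ := by
        calc ‖lam‖ = ‖-(w - lam) + w‖ := by ring_nf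
        _ ≤ _ := by
            rw [← norm_neg (w - lam)]
            exact norm_add_le _ _
      have h2 : ‖w‖ ≤ ‖w - lam‖ + ‖lam‖ := by
        calc ‖w‖ = ‖(w - lam) + lam‖ := by ring_nf
        _ ≤ _ := norm_add_le _ _
      constructor <;> nlinarith
    have hzseg : z ∈ segment ℝ lam z := right_mem_segment ℝ lam z
    obtain ⟨hz1, hz2⟩ := hsegbound z hzseg
    -- comparison of powers
    have hcomp : ∀ w ∈ segment ℝ lam z,
        ‖w‖ ^ k ≤ r ^ k.natAbs * ‖z‖ ^ k := by
      intro w hw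
      obtain ⟨hw1, hw2⟩ := hsegbound w hw
      have hwpos : 0 < ‖w‖ := by nlinarith
      apply zpow_le_aux hwpos hzabs hr1
      · calc ‖w‖ ≤ (1 + ε) * ‖lam‖ := hw2
        _ = r * ((1 - ε) * ‖lam‖) := by rw [hrdef]; field_simp
        _ ≤ r * ‖z‖ := by
            apply mul_le_mul_of_nonneg_left hz1 hr0.le
      · calc ‖z‖ ≤ (1 + ε) * ‖lam‖ := hz2
        _ = r * ((1 - ε) * ‖lam‖) := by rw [hrdef]; field_simp
        _ ≤ r * ‖w‖ := by
            apply mul_le_mul_of_nonneg_left hw1 hr0.le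
    set C : ℝ := c * (r ^ k.natAbs * ‖z‖ ^ k) with hC
    have hmvt : ‖g z - g lam‖ ≤ C * ‖z - lam‖ := by
      apply (convex_segment lam z).norm_image_sub_le_of_norm_fderiv_le
        (fun x hx => hg.differentiableAt (hU.mem_nhds (hseg hx)))
        ?_ (left_mem_segment ℝ lam z) hzseg
      intro x hx
      have hxpos : 0 < ‖x‖ := by
        obtain ⟨hx1, hx2⟩ := hsegbound x hx
        nlinarith
      have hxne : x ≠ 0 := by
        intro h; rw [h] at hxpos; simp at hxpos
      rw [← norm_deriv_eq_norm_fderiv]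
      calc ‖deriv g x‖ = ‖deriv g x‖ := rfl
      _ ≤ c * ‖x‖ ^ (m + n - 1) := hgd x (hseg hx) hxne
      _ ≤ C := by
          rw [hC]
          apply mul_le_mul_of_nonneg_left _ hc.le
          exact hcomp x hx
    have hdpos : 0 < ‖z - lam‖ := by
      have : z - lam ≠ 0 := sub_ne_zero.mpr hzlam
      simpa using this
    rw [norm_div, div_le_iff₀ hdpos]
    have hCle : C * ‖z - lam‖ ≤
        (c * r ^ k.natAbs + c * (1 + ε) / ε) * ‖z‖ ^ k * ‖z - lam‖ := by
      apply mul_le_mul_of_nonneg_right _ hdpos.le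
      rw [hC, ← mul_assoc]
      apply mul_le_mul_of_nonneg_right _ (by positivity)
      have : 0 ≤ c * (1 + ε) / ε := by positivity
      linarith
    exact le_trans hmvt hCle
  · -- Part (ii)
    intro hfar hzU hlamU
    have hd : ε / (1 + ε) * ‖z‖ ≤ ‖z - lam‖ := by
      have h1 : ‖z‖ ≤ ‖z - lam‖ + ‖lam‖ := by
        calc ‖z‖ = ‖(z - lam) + lam‖ := by ring_nf
        _ ≤ _ := norm_add_le _ _
      have h2 : ‖lam‖ ≤ ‖z - lam‖ / ε := by
        rw [le_div_iff₀ hε0]; linarith [hfar]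
      rw [div_mul_eq_mul_div, div_le_iff₀ (by linarith : (0:ℝ) < 1 + ε)]
      have := h2
      nlinarith [hfar, hzabs.le]
    have hdpos : 0 < ‖z - lam‖ := by
      have : z - lam ≠ 0 := sub_ne_zero.mpr hzlam
      simpa using this
    have hnum : ‖g z - g lam‖ ≤ c * (‖z‖ ^ m + ‖lam‖ ^ m) := by
      have h : ‖g z - g lam‖ ≤ ‖g z‖ + ‖g lam‖ := by
        exact norm_sub_le (g z) (g lam)
      have h1 := hgb z hzU hz
      have h2 := hgb lam hlamU hlam
      nlinarith
    rw [norm_div]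
    rw [div_le_iff₀ hdpos]
    have hc1 : c * (‖z‖ ^ m + ‖lam‖ ^ m)
        ≤ (c * (1 + ε) / ε) * (‖z‖)⁻¹ * (‖z‖ ^ m + ‖lam‖ ^ m)
          * ‖z - lam‖ := by
      have hmm : (0:ℝ) < ‖z‖ ^ m + ‖lam‖ ^ m := by positivity
      have : (‖z‖)⁻¹ * ‖z - lam‖ ≥ ε / (1 + ε) := by
        rw [ge_iff_le, inv_mul_eq_div, le_div_iff₀ hzabs]
        linarith [hd]
      calc c * (‖z‖ ^ m + ‖lam‖ ^ m)
          = (c * (1 + ε) / ε) * (‖z‖ ^ m + ‖lam‖ ^ m) * (ε / (1+ε)) := by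
            field_simp
      _ ≤ (c * (1 + ε) / ε) * (‖z‖ ^ m + ‖lam‖ ^ m)
            * ((‖z‖)⁻¹ * ‖z - lam‖) := by
            apply mul_le_mul_of_nonneg_left this (by positivity)
      _ = _ := by ring
    refine le_trans hnum (le_trans hc1 ?_)
    have : (c * (1 + ε) / ε) ≤ c * r ^ k.natAbs + c * (1 + ε) / ε := by
      have : 0 ≤ c * r ^ k.natAbs := by positivity
      linarith
    apply mul_le_mul_of_nonneg_right _ hdpos.le
    apply mul_le_mul_of_nonneg_right _ (by positivity)
    apply mul_le_mul_of_nonneg_right this (by positivity)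
end
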